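/- arXiv:1702.05419 — 4 statements merged into one kernel-verified Lean document; each statement's English description precedes it below -/
import Mathlib

section
/- Let w be a standard Gaussian vector in ℝ^p and a, b ∈ ℝ^p. For σ(t) = cos(t), E[σ(w^T a)·σ(w^T b)] = exp(−(‖a‖² + ‖b‖²)/2)·cosh(a^T b). -/
open MeasureTheory ProbabilityTheory Real BigOperators

/-!
Product-to-sum turns `cos (wᵀa) * cos (wᵀb)` into the average of `cos (wᵀ(a + b))` and
`cos (wᵀ(a - b))`. For every `c`, `E[cos (wᵀc)]` is the real part of the characteristic function
of `w` at `c`, which factors over the independent coordinates into `exp (-‖c‖² / 2)`. Since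
`‖a ± b‖² = ‖a‖² + ‖b‖² ± 2 aᵀb`, averaging the two values gives
`exp (-(‖a‖² + ‖b‖²) / 2) * cosh (aᵀb)`.
-/

lemma Real.cos_mul_cos (x y : ℝ) : cos x * cos y = (cos (x + y) + cos (x - y)) / 2 := by
  rw [cos_add, cos_sub]
  ring

section

variable {ι : Type*} [Fintype ι]

lemma integrable_cos_sum_mul (μ : Measure (ι → ℝ)) [IsFiniteMeasure μ] (c : ι → ℝ) :
    Integrable (fun w : ι → ℝ => cos (∑ i, w i * c i)) μ :=
  .of_bound (by fun_prop : Continuous _).aestronglyMeasurable 1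
    (ae_of_all _ fun _ => abs_cos_le_one _)

lemma integral_cos_sum_mul_eq_re_prod_charFun (μ : ι → Measure ℝ) [∀ i, IsFiniteMeasure (μ i)]
    (c : ι → ℝ) :
    ∫ w, cos (∑ i, w i * c i) ∂Measure.pi μ = (∏ i, charFun (μ i) (c i)).re := by
  have h_cos : ∀ w : ι → ℝ,
      cos (∑ i, w i * c i) = (∏ i, Complex.exp (c i * w i * Complex.I)).re := by
    intro w
    rw [← Complex.exp_sum, ← Finset.sum_mul]
    simp_rw [mul_comm (c _ : ℂ)]
    exact_mod_cast (Complex.exp_ofReal_mul_I_re _).symm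
  have h_int : Integrable (fun w : ι → ℝ => ∏ i, Complex.exp (c i * w i * Complex.I))
      (Measure.pi μ) := by
    refine .of_bound (by fun_prop : Continuous _).aestronglyMeasurable 1
      (ae_of_all _ fun w => ?_)
    simp [norm_prod, Complex.norm_exp]
  simp_rw [h_cos, charFun_apply_real, ← integral_fintype_prod_eq_prod]
  exact integral_re h_int

lemma integral_cos_sum_mul_gaussianReal_pi (c : ι → ℝ) :
    ∫ w, cos (∑ i, w i * c i) ∂(Measure.pi fun _ => gaussianReal 0 1) =
      exp (-(∑ i, c i ^ 2) / 2) := by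
  rw [integral_cos_sum_mul_eq_re_prod_charFun]
  simp_rw [charFun_gaussianReal]
  rw [← Complex.exp_sum, ← Complex.exp_ofReal_re]
  congr 2
  push_cast
  simp [Finset.sum_div, ← Finset.sum_neg_distrib, neg_div]

end

/-- For a standard Gaussian vector `w ∼ N(0, I_p)` and `a, b ∈ ℝᵖ`,
`E[cos(wᵀa)·cos(wᵀb)] = exp(−(‖a‖² + ‖b‖²)/2)·cosh(aᵀb)`. -/
theorem gaussian_cos_kernel {p : ℕ} (a b : Fin p → ℝ) :
    ∫ w : Fin p → ℝ, Real.cos (∑ i, w i * a i) * Real.cos (∑ i, w i * b i)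
        ∂(Measure.pi fun _ => gaussianReal 0 1) =
      Real.exp (-((∑ i, a i ^ 2) + ∑ i, b i ^ 2) / 2) * Real.cosh (∑ i, a i * b i) := by
  have h_prod_to_sum : ∀ w : Fin p → ℝ, cos (∑ i, w i * a i) * cos (∑ i, w i * b i) =
      (cos (∑ i, w i * (a + b) i) + cos (∑ i, w i * (a - b) i)) / 2 := fun w => by
    simp only [Pi.add_apply, Pi.sub_apply, mul_add, mul_sub, Finset.sum_add_distrib,
      Finset.sum_sub_distrib]
    exact cos_mul_cos _ _
  have h_norm_add :
      ∑ i, (a + b) i ^ 2 = (∑ i, a i ^ 2) + (∑ i, b i ^ 2) + 2 * ∑ i, a i * b i := by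
    simp only [Pi.add_apply, add_sq, Finset.sum_add_distrib, Finset.mul_sum, mul_assoc]
    ring
  have h_norm_sub :
      ∑ i, (a - b) i ^ 2 = (∑ i, a i ^ 2) + (∑ i, b i ^ 2) - 2 * ∑ i, a i * b i := by
    simp only [Pi.sub_apply, sub_sq, Finset.sum_add_distrib, Finset.sum_sub_distrib,
      Finset.mul_sum, mul_assoc]
    ring
  simp_rw [h_prod_to_sum]
  rw [integral_div, integral_add (integrable_cos_sum_mul _ _) (integrable_cos_sum_mul _ _),
    integral_cos_sum_mul_gaussianReal_pi, integral_cos_sum_mul_gaussianReal_pi, h_norm_add,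
    h_norm_sub, cosh_eq, mul_div_assoc', mul_add, ← exp_add, ← exp_add]
  ring_nf
end

section
/- Let w be a standard Gaussian vector in ℝ^p and a, b ∈ ℝ^p. For σ(t) = sin(t), E[σ(w^T a)·σ(w^T b)] = exp(−(‖a‖² + ‖b‖²)/2)·sinh(a^T b). -/
/-! The product-to-sum formula turns `sin ⟪x, a⟫ * sin ⟪x, b⟫` into a difference of two cosines
`cos ⟪x, a ∓ b⟫`, whose integrals are real parts of the characteristic function. For the standard
Gaussian that function is `t ↦ exp (-‖t‖² / 2)`, and expanding `‖a ∓ b‖²` leaves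
`exp (-(‖a‖² + ‖b‖²) / 2) * (exp ⟪a, b⟫ - exp (-⟪a, b⟫)) / 2`. -/

open MeasureTheory ProbabilityTheory Real

open scoped RealInnerProductSpace

section

variable {E : Type*} [NormedAddCommGroup E] [InnerProductSpace ℝ E] [MeasurableSpace E]
  [OpensMeasurableSpace E] {μ : Measure E} [IsFiniteMeasure μ]

lemma integrable_cos_inner (t : E) : Integrable (fun x ↦ cos ⟪x, t⟫) μ :=
  (integrable_const (1 : ℝ)).mono (by fun_prop) (by simp [abs_cos_le_one])

lemma integral_cos_inner_eq_re_charFun (t : E) :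
    ∫ x, cos ⟪x, t⟫ ∂μ = (charFun μ t).re := by
  have hint : Integrable (fun x ↦ Complex.exp (⟪x, t⟫ * Complex.I)) μ :=
    (integrable_const (1 : ℝ)).mono (by fun_prop) (by simp [Complex.norm_exp_ofReal_mul_I])
  simp_rw [charFun_apply, ← Complex.exp_ofReal_mul_I_re]
  exact integral_re hint

lemma integral_sin_inner_mul_sin_inner (a b : E) :
    ∫ x, sin ⟪x, a⟫ * sin ⟪x, b⟫ ∂μ =
      ((charFun μ (a - b)).re - (charFun μ (a + b)).re) / 2 := by
  have hprod : ∀ x, sin ⟪x, a⟫ * sin ⟪x, b⟫ = (cos ⟪x, a - b⟫ - cos ⟪x, a + b⟫) / 2 := by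
    intro x
    rw [inner_sub_right, inner_add_right, cos_sub, cos_add]
    ring
  simp_rw [hprod]
  rw [integral_div, integral_sub (integrable_cos_inner _) (integrable_cos_inner _),
    integral_cos_inner_eq_re_charFun, integral_cos_inner_eq_re_charFun]

end

lemma re_charFun_stdGaussian {E : Type*} [NormedAddCommGroup E] [InnerProductSpace ℝ E]
    [FiniteDimensional ℝ E] [MeasurableSpace E] [BorelSpace E] (t : E) :
    (charFun (stdGaussian E) t).re = exp (-‖t‖ ^ 2 / 2) := by
  rw [charFun_stdGaussian]
  exact_mod_cast Complex.exp_ofReal_re _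

lemma integral_sin_inner_mul_sin_inner_stdGaussian {E : Type*} [NormedAddCommGroup E]
    [InnerProductSpace ℝ E] [FiniteDimensional ℝ E] [MeasurableSpace E] [BorelSpace E]
    (a b : E) :
    ∫ x, sin ⟪x, a⟫ * sin ⟪x, b⟫ ∂stdGaussian E =
      exp (-(‖a‖ ^ 2 + ‖b‖ ^ 2) / 2) * sinh ⟪a, b⟫ := by
  rw [integral_sin_inner_mul_sin_inner, re_charFun_stdGaussian, re_charFun_stdGaussian,
    norm_sub_sq_real, norm_add_sq_real,
    show -(‖a‖ ^ 2 - 2 * ⟪a, b⟫ + ‖b‖ ^ 2) / 2 = -(‖a‖ ^ 2 + ‖b‖ ^ 2) / 2 + ⟪a, b⟫ by ring,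
    show -(‖a‖ ^ 2 + 2 * ⟪a, b⟫ + ‖b‖ ^ 2) / 2 = -(‖a‖ ^ 2 + ‖b‖ ^ 2) / 2 + -⟪a, b⟫ by ring,
    exp_add, exp_add, sinh_eq]
  ring

/-- For a standard Gaussian vector `w ∼ N(0, I_p)` and `a, b ∈ ℝᵖ`,
`E[sin(wᵀa)·sin(wᵀb)] = exp(−(‖a‖² + ‖b‖²)/2)·sinh(aᵀb)`. -/
theorem gaussian_sin_kernel {p : ℕ} (a b : Fin p → ℝ) :
    ∫ w : Fin p → ℝ, Real.sin (∑ i, w i * a i) * Real.sin (∑ i, w i * b i)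
        ∂(Measure.pi fun _ => gaussianReal 0 1) =
      Real.exp (-((∑ i, a i ^ 2) + ∑ i, b i ^ 2) / 2) * Real.sinh (∑ i, a i * b i) := by
  have key := integral_sin_inner_mul_sin_inner_stdGaussian (WithLp.toLp 2 a) (WithLp.toLp 2 b)
  rw [← map_pi_eq_stdGaussian, ← MeasurableEquiv.coe_toLp,
    integral_map_equiv (MeasurableEquiv.toLp 2 (Fin p → ℝ))] at key
  simpa [EuclideanSpace.real_norm_sq_eq, PiLp.inner_apply, mul_comm] using key
end

section
/- Let w ∈ ℝ^p be a random vector with i.i.d. entries of mean zero, variance m₂, third moment m₃, and fourth moment m₄. For σ(t) = ζ₂t² + ζ₁t + ζ₀ and fixed a, b ∈ ℝ^p, E[σ(w^T a)·σ(w^T b)] = ζ₂²[m₂²(2(a^T b)² + ‖a‖²‖b‖²) + (m₄ − 3m₂²)(a²)^T(b²)] + ζ₁² m₂ a^T b + ζ₂ζ₁ m₃[(a²)^T b + a^T(b²)] + ζ₂ζ₀ m₂[‖a‖² + ‖b‖²] + ζ₀², where (a²) denotes the vector of squared entries of a. -/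
/-!
For sums of independent centered random variables the second and third moments are additive,
and so is the fourth cumulant `E[Z⁴] - 3 E[Z²]²`. Hence `E[(∑ wᵢ cᵢ)ᵏ]` for `k ≤ 4` is an explicit
polynomial in `c` and the moments `m₂, m₃, m₄`. The integrand `σ(X) σ(Y)`, with `X = ∑ wᵢ aᵢ`
and `Y = ∑ wᵢ bᵢ`, is turned into powers of `X + Y`, `X - Y`, `X` and `Y` by polarization:
`x²y² = ((x + y)⁴ + (x - y)⁴ - 2x⁴ - 2y⁴) / 12`, `x²y + xy² = ((x + y)³ - x³ - y³) / 3` and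
`xy = ((x + y)² - x² - y²) / 2`; since `X ± Y = ∑ wᵢ (aᵢ ± bᵢ)`, each of these has a known
expectation.
-/

open MeasureTheory ProbabilityTheory Finset

section

variable {Ω : Type*} {mΩ : MeasurableSpace Ω} {μ : Measure Ω}

lemma MeasureTheory.MemLp.integrable_pow_of_le [IsFiniteMeasure μ] {f : Ω → ℝ} {n k : ℕ}
    (hf : MemLp f n μ) (hk : k ≤ n) : Integrable (fun ω => f ω ^ k) μ := by
  have h := (hf.mono_exponent (by exact_mod_cast hk : (k : ENNReal) ≤ n)).integrable_norm_pow'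
  exact (integrable_norm_iff (hf.aestronglyMeasurable.pow k)).1 (by simpa [norm_pow] using h)

namespace ProbabilityTheory

section TwoSummands

variable {X Y : Ω → ℝ}

theorem IndepFun.integral_add_pow [IsFiniteMeasure μ] (hXY : IndepFun X Y μ) {n : ℕ}
    (hX : MemLp X n μ) (hY : MemLp Y n μ) :
    ∫ ω, (X ω + Y ω) ^ n ∂μ =
      ∑ k ∈ range (n + 1), (∫ ω, X ω ^ k ∂μ) * (∫ ω, Y ω ^ (n - k) ∂μ) * n.choose k := by
  have hpow : ∀ k ∈ range (n + 1), IndepFun (fun ω => X ω ^ k) (fun ω => Y ω ^ (n - k)) μ :=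
    fun k _ => hXY.comp (measurable_id.pow_const k) (measurable_id.pow_const (n - k))
  have hint : ∀ k ∈ range (n + 1), Integrable (fun ω => X ω ^ k * Y ω ^ (n - k)) μ :=
    fun k hk => (hpow k hk).integrable_mul (hX.integrable_pow_of_le (by simp at hk; omega))
      (hY.integrable_pow_of_le (Nat.sub_le n k))
  simp_rw [add_pow]
  rw [integral_finsetSum _ fun k hk => (hint k hk).mul_const _]
  refine sum_congr rfl fun k hk => ?_
  rw [integral_mul_const, (hpow k hk).integral_fun_mul_eq_mul_integral
    (hX.aestronglyMeasurable.pow k) (hY.aestronglyMeasurable.pow (n - k))]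

variable [IsProbabilityMeasure μ]

theorem IndepFun.integral_add_sq (hXY : IndepFun X Y μ)
    (hX0 : ∫ ω, X ω ∂μ = 0) (hY0 : ∫ ω, Y ω ∂μ = 0) (hX : MemLp X 2 μ) (hY : MemLp Y 2 μ) :
    ∫ ω, (X ω + Y ω) ^ 2 ∂μ = ∫ ω, X ω ^ 2 ∂μ + ∫ ω, Y ω ^ 2 ∂μ := by
  rw [hXY.integral_add_pow (by exact_mod_cast hX) (by exact_mod_cast hY)]
  simp [sum_range_succ, hX0, hY0]
  ring

theorem IndepFun.integral_add_pow_three (hXY : IndepFun X Y μ)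
    (hX0 : ∫ ω, X ω ∂μ = 0) (hY0 : ∫ ω, Y ω ∂μ = 0) (hX : MemLp X 3 μ) (hY : MemLp Y 3 μ) :
    ∫ ω, (X ω + Y ω) ^ 3 ∂μ = ∫ ω, X ω ^ 3 ∂μ + ∫ ω, Y ω ^ 3 ∂μ := by
  rw [hXY.integral_add_pow (by exact_mod_cast hX) (by exact_mod_cast hY)]
  simp [sum_range_succ, hX0, hY0]
  ring

theorem IndepFun.integral_add_pow_four (hXY : IndepFun X Y μ)
    (hX0 : ∫ ω, X ω ∂μ = 0) (hY0 : ∫ ω, Y ω ∂μ = 0) (hX : MemLp X 4 μ) (hY : MemLp Y 4 μ) :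
    ∫ ω, (X ω + Y ω) ^ 4 ∂μ =
      ∫ ω, X ω ^ 4 ∂μ + 6 * (∫ ω, X ω ^ 2 ∂μ) * (∫ ω, Y ω ^ 2 ∂μ) + ∫ ω, Y ω ^ 4 ∂μ := by
  rw [hXY.integral_add_pow (by exact_mod_cast hX) (by exact_mod_cast hY)]
  simp [sum_range_succ, hX0, hY0, Nat.choose]
  ring

end TwoSummands

/-- For centered `X`, this is the fourth cumulant of `X`. -/
noncomputable def fourthCumulant (X : Ω → ℝ) (μ : Measure Ω) : ℝ :=
  ∫ ω, X ω ^ 4 ∂μ - 3 * (∫ ω, X ω ^ 2 ∂μ) ^ 2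

theorem IndepFun.fourthCumulant_add [IsProbabilityMeasure μ] {X Y : Ω → ℝ}
    (hXY : IndepFun X Y μ) (hX0 : ∫ ω, X ω ∂μ = 0) (hY0 : ∫ ω, Y ω ∂μ = 0)
    (hX : MemLp X 4 μ) (hY : MemLp Y 4 μ) :
    fourthCumulant (fun ω => X ω + Y ω) μ = fourthCumulant X μ + fourthCumulant Y μ := by
  simp only [fourthCumulant]
  rw [hXY.integral_add_pow_four hX0 hY0 hX hY, hXY.integral_add_sq hX0 hY0
    (hX.mono_exponent (by norm_num)) (hY.mono_exponent (by norm_num))]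
  ring

section FiniteSums

variable [IsProbabilityMeasure μ] {ι : Type*} {Y : ι → Ω → ℝ}

theorem iIndepFun.map_sum_of_map_add {F : (Ω → ℝ) → ℝ} {n : ℕ} (hn : 1 ≤ n)
    (hF0 : F (fun _ => 0) = 0)
    (hF : ∀ X Z : Ω → ℝ, IndepFun X Z μ → ∫ ω, X ω ∂μ = 0 → ∫ ω, Z ω ∂μ = 0 →
      MemLp X n μ → MemLp Z n μ → F (fun ω => X ω + Z ω) = F X + F Z)
    (hY : iIndepFun Y μ) (hY0 : ∀ i, ∫ ω, Y i ω ∂μ = 0) (hL : ∀ i, MemLp (Y i) n μ)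
    (s : Finset ι) :
    F (fun ω => ∑ i ∈ s, Y i ω) = ∑ i ∈ s, F (Y i) := by
  classical
  induction s using Finset.induction_on with
  | empty => simpa using hF0
  | insert i s hi ih =>
    have hindep : IndepFun (Y i) (fun ω => ∑ j ∈ s, Y j ω) μ := by
      simpa only [sum_fn] using
        (hY.indepFun_finsetSum_of_notMem₀ (fun j => (hL j).aemeasurable) hi).symm
    have hS0 : ∫ ω, ∑ j ∈ s, Y j ω ∂μ = 0 := by
      rw [integral_finsetSum s fun j _ => (hL j).integrable (by exact_mod_cast hn)]
      simp [hY0]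
    simp only [sum_insert hi]
    rw [hF _ _ hindep (hY0 i) hS0 (hL i) (memLp_finsetSum s fun j _ => hL j), ih]

theorem iIndepFun.integral_sum_sq (hY : iIndepFun Y μ) (hY0 : ∀ i, ∫ ω, Y i ω ∂μ = 0)
    (hL : ∀ i, MemLp (Y i) 2 μ) (s : Finset ι) :
    ∫ ω, (∑ i ∈ s, Y i ω) ^ 2 ∂μ = ∑ i ∈ s, ∫ ω, Y i ω ^ 2 ∂μ :=
  hY.map_sum_of_map_add (F := fun X => ∫ ω, X ω ^ 2 ∂μ) (n := 2) (by norm_num) (by simp)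
    (fun _ _ hXZ hX0 hZ0 hX hZ => hXZ.integral_add_sq hX0 hZ0 (by exact_mod_cast hX)
      (by exact_mod_cast hZ)) hY0 (fun i => by exact_mod_cast hL i) s

theorem iIndepFun.integral_sum_pow_three (hY : iIndepFun Y μ) (hY0 : ∀ i, ∫ ω, Y i ω ∂μ = 0)
    (hL : ∀ i, MemLp (Y i) 3 μ) (s : Finset ι) :
    ∫ ω, (∑ i ∈ s, Y i ω) ^ 3 ∂μ = ∑ i ∈ s, ∫ ω, Y i ω ^ 3 ∂μ :=
  hY.map_sum_of_map_add (F := fun X => ∫ ω, X ω ^ 3 ∂μ) (n := 3) (by norm_num) (by simp)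
    (fun _ _ hXZ hX0 hZ0 hX hZ => hXZ.integral_add_pow_three hX0 hZ0 (by exact_mod_cast hX)
      (by exact_mod_cast hZ)) hY0 (fun i => by exact_mod_cast hL i) s

theorem iIndepFun.integral_sum_pow_four (hY : iIndepFun Y μ) (hY0 : ∀ i, ∫ ω, Y i ω ∂μ = 0)
    (hL : ∀ i, MemLp (Y i) 4 μ) (s : Finset ι) :
    ∫ ω, (∑ i ∈ s, Y i ω) ^ 4 ∂μ =
      3 * (∑ i ∈ s, ∫ ω, Y i ω ^ 2 ∂μ) ^ 2 + ∑ i ∈ s, fourthCumulant (Y i) μ := by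
  have hκ := hY.map_sum_of_map_add (F := (fourthCumulant · μ)) (n := 4) (by norm_num)
    (by simp [fourthCumulant])
    (fun _ _ hXZ hX0 hZ0 hX hZ => hXZ.fourthCumulant_add hX0 hZ0 (by exact_mod_cast hX)
      (by exact_mod_cast hZ)) hY0 (fun i => by exact_mod_cast hL i) s
  rw [← hκ, fourthCumulant, hY.integral_sum_sq hY0 (fun i => (hL i).mono_exponent (by norm_num))]
  ring

end FiniteSums

section LinearForms

variable {ι : Type*} {w : ι → Ω → ℝ} {m₂ m₃ m₄ : ℝ}

lemma iIndepFun.mul_const (hw : iIndepFun w μ) (c : ι → ℝ) :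
    iIndepFun (fun i ω => w i ω * c i) μ :=
  hw.comp (fun i x => x * c i) fun i => measurable_mul_const (c i)

variable [IsProbabilityMeasure μ]

theorem iIndepFun.integral_sum_mul_sq (hw : iIndepFun w μ) (hL : ∀ i, MemLp (w i) 2 μ)
    (h1 : ∀ i, ∫ ω, w i ω ∂μ = 0) (h2 : ∀ i, ∫ ω, w i ω ^ 2 ∂μ = m₂) (s : Finset ι)
    (c : ι → ℝ) :
    ∫ ω, (∑ i ∈ s, w i ω * c i) ^ 2 ∂μ = m₂ * ∑ i ∈ s, c i ^ 2 := by
  rw [(hw.mul_const c).integral_sum_sq (fun i => by simp [integral_mul_const, h1])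
    (fun i => (hL i).mul_const (c i)), mul_sum]
  simp [mul_pow, integral_mul_const, h2]

theorem iIndepFun.integral_sum_mul_pow_three (hw : iIndepFun w μ) (hL : ∀ i, MemLp (w i) 3 μ)
    (h1 : ∀ i, ∫ ω, w i ω ∂μ = 0) (h3 : ∀ i, ∫ ω, w i ω ^ 3 ∂μ = m₃) (s : Finset ι)
    (c : ι → ℝ) :
    ∫ ω, (∑ i ∈ s, w i ω * c i) ^ 3 ∂μ = m₃ * ∑ i ∈ s, c i ^ 3 := by
  rw [(hw.mul_const c).integral_sum_pow_three (fun i => by simp [integral_mul_const, h1])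
    (fun i => (hL i).mul_const (c i)), mul_sum]
  simp [mul_pow, integral_mul_const, h3]

theorem iIndepFun.integral_sum_mul_pow_four (hw : iIndepFun w μ) (hL : ∀ i, MemLp (w i) 4 μ)
    (h1 : ∀ i, ∫ ω, w i ω ∂μ = 0) (h2 : ∀ i, ∫ ω, w i ω ^ 2 ∂μ = m₂)
    (h4 : ∀ i, ∫ ω, w i ω ^ 4 ∂μ = m₄) (s : Finset ι) (c : ι → ℝ) :
    ∫ ω, (∑ i ∈ s, w i ω * c i) ^ 4 ∂μ =
      3 * (m₂ * ∑ i ∈ s, c i ^ 2) ^ 2 + (m₄ - 3 * m₂ ^ 2) * ∑ i ∈ s, c i ^ 4 := by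
  rw [(hw.mul_const c).integral_sum_pow_four (fun i => by simp [integral_mul_const, h1])
    (fun i => (hL i).mul_const (c i)), mul_sum, mul_sum]
  simp only [fourthCumulant, mul_pow, integral_mul_const, h2, h4]
  congr 1
  exact sum_congr rfl fun i _ => by ring

end LinearForms

end ProbabilityTheory

section Quartic

variable [IsProbabilityMeasure μ] {S : Ω → ℝ} (c₀ c₁ c₂ c₃ c₄ : ℝ)

lemma MeasureTheory.MemLp.integrable_quartic (hS : MemLp S 4 μ) :
    Integrable (fun ω => c₄ * S ω ^ 4 + c₃ * S ω ^ 3 + c₂ * S ω ^ 2 + c₁ * S ω + c₀) μ := by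
  have h1 : Integrable S μ := hS.integrable (by norm_num)
  have h2 := hS.integrable_pow_of_le (n := 4) (k := 2) (by norm_num)
  have h3 := hS.integrable_pow_of_le (n := 4) (k := 3) (by norm_num)
  have h4 := hS.integrable_pow_of_le (n := 4) (k := 4) le_rfl
  fun_prop

lemma MeasureTheory.MemLp.integral_quartic (hS : MemLp S 4 μ) :
    ∫ ω, (c₄ * S ω ^ 4 + c₃ * S ω ^ 3 + c₂ * S ω ^ 2 + c₁ * S ω + c₀) ∂μ =
      c₄ * ∫ ω, S ω ^ 4 ∂μ + c₃ * ∫ ω, S ω ^ 3 ∂μ + c₂ * ∫ ω, S ω ^ 2 ∂μ +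
        c₁ * ∫ ω, S ω ∂μ + c₀ := by
  have h1 : Integrable S μ := hS.integrable (by norm_num)
  have h2 := hS.integrable_pow_of_le (n := 4) (k := 2) (by norm_num)
  have h3 := hS.integrable_pow_of_le (n := 4) (k := 3) (by norm_num)
  have h4 := hS.integrable_pow_of_le (n := 4) (k := 4) le_rfl
  rw [integral_add (by fun_prop) (by fun_prop), integral_add (by fun_prop) (by fun_prop),
    integral_add (by fun_prop) (by fun_prop), integral_add (by fun_prop) (by fun_prop)]
  simp [integral_const_mul]

end Quartic

theorem integral_quadratic_mul_quadratic [IsProbabilityMeasure μ] {X Y : Ω → ℝ}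
    (hX : MemLp X 4 μ) (hY : MemLp Y 4 μ) (ζ₀ ζ₁ ζ₂ : ℝ) :
    ∫ ω, (ζ₂ * X ω ^ 2 + ζ₁ * X ω + ζ₀) * (ζ₂ * Y ω ^ 2 + ζ₁ * Y ω + ζ₀) ∂μ =
      ζ₂ ^ 2 / 12 * (∫ ω, (X ω + Y ω) ^ 4 ∂μ + ∫ ω, (X ω - Y ω) ^ 4 ∂μ
          - 2 * ∫ ω, X ω ^ 4 ∂μ - 2 * ∫ ω, Y ω ^ 4 ∂μ)
        + ζ₂ * ζ₁ / 3 * (∫ ω, (X ω + Y ω) ^ 3 ∂μ - ∫ ω, X ω ^ 3 ∂μ - ∫ ω, Y ω ^ 3 ∂μ)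
        + ζ₁ ^ 2 / 2 * (∫ ω, (X ω + Y ω) ^ 2 ∂μ - ∫ ω, X ω ^ 2 ∂μ - ∫ ω, Y ω ^ 2 ∂μ)
        + ζ₂ * ζ₀ * (∫ ω, X ω ^ 2 ∂μ + ∫ ω, Y ω ^ 2 ∂μ)
        + ζ₁ * ζ₀ * (∫ ω, X ω ∂μ + ∫ ω, Y ω ∂μ) + ζ₀ ^ 2 := by
  have hpolarize : ∀ ω, (ζ₂ * X ω ^ 2 + ζ₁ * X ω + ζ₀) * (ζ₂ * Y ω ^ 2 + ζ₁ * Y ω + ζ₀) =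
      (ζ₂ ^ 2 / 12 * (X ω + Y ω) ^ 4 + ζ₂ * ζ₁ / 3 * (X ω + Y ω) ^ 3
          + ζ₁ ^ 2 / 2 * (X ω + Y ω) ^ 2 + 0 * (X ω + Y ω) + 0)
        + (ζ₂ ^ 2 / 12 * (X ω - Y ω) ^ 4 + 0 * (X ω - Y ω) ^ 3 + 0 * (X ω - Y ω) ^ 2
          + 0 * (X ω - Y ω) + 0)
        + (-ζ₂ ^ 2 / 6 * X ω ^ 4 + -ζ₂ * ζ₁ / 3 * X ω ^ 3 + (ζ₂ * ζ₀ - ζ₁ ^ 2 / 2) * X ω ^ 2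
          + ζ₁ * ζ₀ * X ω + ζ₀ ^ 2)
        + (-ζ₂ ^ 2 / 6 * Y ω ^ 4 + -ζ₂ * ζ₁ / 3 * Y ω ^ 3 + (ζ₂ * ζ₀ - ζ₁ ^ 2 / 2) * Y ω ^ 2
          + ζ₁ * ζ₀ * Y ω + 0) := fun ω => by ring
  have hadd : MemLp (fun ω => X ω + Y ω) 4 μ := hX.add hY
  have hsub : MemLp (fun ω => X ω - Y ω) 4 μ := hX.sub hY
  rw [integral_congr_ae (ae_of_all μ hpolarize),
    integral_add (((hadd.integrable_quartic ..).fun_add (hsub.integrable_quartic ..)).fun_add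
      (hX.integrable_quartic ..)) (hY.integrable_quartic ..),
    integral_add ((hadd.integrable_quartic ..).fun_add (hsub.integrable_quartic ..))
      (hX.integrable_quartic ..),
    integral_add (hadd.integrable_quartic ..) (hsub.integrable_quartic ..),
    hadd.integral_quartic, hsub.integral_quartic, hX.integral_quartic, hY.integral_quartic]
  ring

end

theorem quadratic_activation_kernel_general {p : ℕ} {Ω : Type*} [MeasureSpace Ω]
    [IsProbabilityMeasure (ℙ : Measure Ω)]
    (w : Fin p → Ω → ℝ)
    (hindep : iIndepFun w ℙ)
    (hL4 : ∀ i, MemLp (w i) 4 ℙ)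
    (m₂ m₃ m₄ ζ₀ ζ₁ ζ₂ : ℝ)
    (h1 : ∀ i, ∫ ω, w i ω = 0)
    (h2 : ∀ i, ∫ ω, (w i ω) ^ 2 = m₂)
    (h3 : ∀ i, ∫ ω, (w i ω) ^ 3 = m₃)
    (h4 : ∀ i, ∫ ω, (w i ω) ^ 4 = m₄)
    (a b : Fin p → ℝ) :
    ∫ ω, (ζ₂ * (∑ i, w i ω * a i) ^ 2 + ζ₁ * (∑ i, w i ω * a i) + ζ₀) *
          (ζ₂ * (∑ i, w i ω * b i) ^ 2 + ζ₁ * (∑ i, w i ω * b i) + ζ₀) =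
      ζ₂ ^ 2 * (m₂ ^ 2 * (2 * (∑ i, a i * b i) ^ 2 + (∑ i, a i ^ 2) * (∑ i, b i ^ 2))
          + (m₄ - 3 * m₂ ^ 2) * (∑ i, a i ^ 2 * b i ^ 2))
        + ζ₁ ^ 2 * m₂ * (∑ i, a i * b i)
        + ζ₂ * ζ₁ * m₃ * ((∑ i, a i ^ 2 * b i) + (∑ i, a i * b i ^ 2))
        + ζ₂ * ζ₀ * m₂ * ((∑ i, a i ^ 2) + (∑ i, b i ^ 2))
        + ζ₀ ^ 2 := by
  have hw2 : ∀ i, MemLp (w i) 2 ℙ := fun i => (hL4 i).mono_exponent (by norm_num)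
  have hw3 : ∀ i, MemLp (w i) 3 ℙ := fun i => (hL4 i).mono_exponent (by norm_num)
  have hS : ∀ c : Fin p → ℝ, MemLp (fun ω => ∑ i, w i ω * c i) 4 ℙ := fun c =>
    memLp_finsetSum _ fun i _ => (hL4 i).mul_const (c i)
  have hS0 : ∀ c : Fin p → ℝ, ∫ ω, ∑ i, w i ω * c i = 0 := fun c => by
    rw [integral_finsetSum _ fun i _ => ((hL4 i).integrable (by norm_num)).mul_const (c i)]
    simp [integral_mul_const, h1]
  rw [integral_quadratic_mul_quadratic (hS a) (hS b)]
  have hadd : ∀ ω, ∑ i, w i ω * a i + ∑ i, w i ω * b i = ∑ i, w i ω * (a i + b i) := fun ω => by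
    simp only [mul_add, sum_add_distrib]
  have hsub : ∀ ω, ∑ i, w i ω * a i - ∑ i, w i ω * b i = ∑ i, w i ω * (a i - b i) := fun ω => by
    simp only [mul_sub, sum_sub_distrib]
  simp only [hadd, hsub, hS0, hindep.integral_sum_mul_sq hw2 h1 h2,
    hindep.integral_sum_mul_pow_three hw3 h1 h3, hindep.integral_sum_mul_pow_four hL4 h1 h2 h4]
  ring_nf
  simp only [sum_add_distrib, sum_sub_distrib, sum_neg_distrib, ← sum_mul]
  ring

/-- For a random vector `w` with i.i.d. entries of mean 0 and
moments `m₂, m₃, m₄`, and `σ(t) = ζ₂t² + ζ₁t + ζ₀`,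
`E[σ(wᵀa)σ(wᵀb)]` equals the explicit polynomial expression in the moments. -/
theorem quadratic_activation_kernel {p : ℕ} {Ω : Type*} [MeasureSpace Ω]
    [IsProbabilityMeasure (ℙ : Measure Ω)]
    (w : Fin p → Ω → ℝ)
    (hindep : iIndepFun w ℙ)
    (hident : ∀ i j : Fin p, Measure.map (w i) ℙ = Measure.map (w j) ℙ)
    (hL4 : ∀ i, MemLp (w i) 4 ℙ)
    (m₂ m₃ m₄ ζ₀ ζ₁ ζ₂ : ℝ)
    (h1 : ∀ i, ∫ ω, w i ω = 0)
    (h2 : ∀ i, ∫ ω, (w i ω) ^ 2 = m₂)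
    (h3 : ∀ i, ∫ ω, (w i ω) ^ 3 = m₃)
    (h4 : ∀ i, ∫ ω, (w i ω) ^ 4 = m₄)
    (a b : Fin p → ℝ) :
    ∫ ω, (ζ₂ * (∑ i, w i ω * a i) ^ 2 + ζ₁ * (∑ i, w i ω * a i) + ζ₀) *
          (ζ₂ * (∑ i, w i ω * b i) ^ 2 + ζ₁ * (∑ i, w i ω * b i) + ζ₀) =
      ζ₂ ^ 2 * (m₂ ^ 2 * (2 * (∑ i, a i * b i) ^ 2 + (∑ i, a i ^ 2) * (∑ i, b i ^ 2))
          + (m₄ - 3 * m₂ ^ 2) * (∑ i, a i ^ 2 * b i ^ 2))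
        + ζ₁ ^ 2 * m₂ * (∑ i, a i * b i)
        + ζ₂ * ζ₁ * m₃ * ((∑ i, a i ^ 2 * b i) + (∑ i, a i * b i ^ 2))
        + ζ₂ * ζ₀ * m₂ * ((∑ i, a i ^ 2) + (∑ i, b i ^ 2))
        + ζ₀ ^ 2 :=
  quadratic_activation_kernel_general w hindep hL4 m₂ m₃ m₄ ζ₀ ζ₁ ζ₂ h1 h2 h3 h4 a b
end

section
/- Let Φ be a symmetric positive semidefinite T×T matrix, γ > 0, n, T positive integers, and δ > 0 the solution of δ = (1/T)·tr(Φ·Q̄) where Q̄ = ((n/T)·Φ/(1+δ) + γ I_T)^{-1}. Then δ = (n(1+δ)/(T(1+δ)²))·(1/T)·tr(Φ² Q̄²) + γ·(1/T)·tr(Φ Q̄²), and consequently (n/(T(1+δ)²))·(1/T)·tr(Φ² Q̄²) ≤ δ/(1+δ) < 1. -/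
/-!
Since `Q̄⁻¹ = (n/T)/(1+δ) • Φ + γ • 1`, we have `Φ Q̄ = Φ Q̄² Q̄⁻¹`, whose trace splits as
`(n/T)/(1+δ) · tr(Φ² Q̄²) + γ · tr(Φ Q̄²)`; this is the identity. Both traces are nonnegative,
being traces of `Q̄ Φ² Q̄` and `Q̄ Φ Q̄` with `Q̄` symmetric, so dropping the `γ`-term gives the bound.
-/

open Matrix

namespace Matrix

variable {ι R : Type*} [DecidableEq ι]

theorem trace_mul_eq_of_mul_smul_add_smul_one_eq_one [Fintype ι] [CommRing R]
    {Φ Q : Matrix ι ι R} {c γ : R} (hQ : Q * (c • Φ + γ • 1) = 1) :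
    (Φ * Q).trace = c * (Φ ^ 2 * Q ^ 2).trace + γ * (Φ * Q ^ 2).trace := by
  have hΦQ : Φ * Q = c • (Φ * Q ^ 2 * Φ) + γ • (Φ * Q ^ 2) :=
    calc Φ * Q = Φ * Q ^ 2 * (c • Φ + γ • 1) := by
          rw [Matrix.mul_assoc, pow_two, Matrix.mul_assoc, hQ, Matrix.mul_one]
      _ = c • (Φ * Q ^ 2 * Φ) + γ • (Φ * Q ^ 2) := by
          rw [Matrix.mul_add, Matrix.mul_smul, Matrix.mul_smul, Matrix.mul_one]
  rw [hΦQ, trace_add, trace_smul, trace_smul, trace_mul_comm, ← Matrix.mul_assoc, ← pow_two,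
    smul_eq_mul, smul_eq_mul]

variable [CommRing R] [PartialOrder R] [StarRing R] [StarOrderedRing R]

theorem PosSemidef.trace_mul_sq_nonneg [Fintype ι] {P Q : Matrix ι ι R} (hP : P.PosSemidef)
    (hQ : Q.IsHermitian) : 0 ≤ (P * Q ^ 2).trace := by
  have hQPQ : (Q * P * Q).PosSemidef := by
    simpa only [hQ.eq] using hP.mul_mul_conjTranspose_same Q
  rw [pow_two, ← Matrix.mul_assoc, trace_mul_comm, ← Matrix.mul_assoc]
  exact hQPQ.trace_nonneg

theorem PosSemidef.smul_add_smul_one_posDef [NoZeroDivisors R] [PosSMulStrictMono R R]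
    {Φ : Matrix ι ι R} (hΦ : Φ.PosSemidef) {c γ : R} (hc : 0 ≤ c) (hγ : 0 < γ) :
    (c • Φ + γ • (1 : Matrix ι ι R)).PosDef :=
  PosDef.posSemidef_add (hΦ.smul hc) (PosDef.one.smul hγ)

end Matrix

theorem delta_trace_identity_general {T n : ℕ}
    (γ : ℝ) (hγ : 0 < γ)
    (Φ : Matrix (Fin T) (Fin T) ℝ) (hΦ : Φ.PosSemidef) (δ : ℝ) (hδ : 0 < δ)
    (Qb : Matrix (Fin T) (Fin T) ℝ)
    (hQb : Qb = ((((n : ℝ) / T) / (1 + δ)) • Φ + γ • (1 : Matrix (Fin T) (Fin T) ℝ))⁻¹)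
    (hfix : δ = (1 / T : ℝ) * (Φ * Qb).trace) :
    δ = ((n : ℝ) * (1 + δ) / (T * (1 + δ) ^ 2)) * ((1 / T : ℝ) * (Φ ^ 2 * Qb ^ 2).trace)
          + γ * ((1 / T : ℝ) * (Φ * Qb ^ 2).trace) ∧
    ((n : ℝ) / (T * (1 + δ) ^ 2)) * ((1 / T : ℝ) * (Φ ^ 2 * Qb ^ 2).trace) ≤ δ / (1 + δ) ∧
    δ / (1 + δ) < 1 := by
  set c : ℝ := ((n : ℝ) / T) / (1 + δ)
  have h1δ : 0 < 1 + δ := by linarith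
  have hA : (c • Φ + γ • (1 : Matrix (Fin T) (Fin T) ℝ)).PosDef :=
    hΦ.smul_add_smul_one_posDef (by positivity) hγ
  have hQbA : Qb * (c • Φ + γ • 1) = 1 := hQb ▸ nonsing_inv_mul _ hA.det_pos.ne'.isUnit
  have hQbH : Qb.IsHermitian := hQb ▸ hA.inv.isHermitian
  have hδ_eq : δ = c * ((1 / T : ℝ) * (Φ ^ 2 * Qb ^ 2).trace)
      + γ * ((1 / T : ℝ) * (Φ * Qb ^ 2).trace) := by
    rw [hfix, trace_mul_eq_of_mul_smul_add_smul_one_eq_one hQbA]; ring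
  have ht2 : 0 ≤ (1 / T : ℝ) * (Φ ^ 2 * Qb ^ 2).trace :=
    mul_nonneg (by positivity) ((hΦ.pow 2).trace_mul_sq_nonneg hQbH)
  have ht1 : 0 ≤ (1 / T : ℝ) * (Φ * Qb ^ 2).trace :=
    mul_nonneg (by positivity) (hΦ.trace_mul_sq_nonneg hQbH)
  have hcoef : (n : ℝ) * (1 + δ) / (T * (1 + δ) ^ 2) = c := by
    rw [pow_two, ← mul_assoc, mul_div_mul_right _ _ h1δ.ne', ← div_div]
  have hcoef' : (n : ℝ) / (T * (1 + δ) ^ 2) = c / (1 + δ) := by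
    rw [pow_two, ← mul_assoc]; simp only [c, div_div]
  refine ⟨hcoef ▸ hδ_eq, ?_, (div_lt_one h1δ).2 (by linarith)⟩
  rw [hcoef', div_mul_eq_mul_div]
  gcongr
  linarith [mul_nonneg hγ.le ht1]

/-- If `δ > 0` satisfies `δ = (1/T)tr(Φ Q̄)` with
`Q̄ = ((n/T)Φ/(1+δ) + γI_T)⁻¹`, then
`δ = (n(1+δ)/(T(1+δ)²))·(1/T)tr(Φ²Q̄²) + γ·(1/T)tr(ΦQ̄²)` and consequently
`(n/(T(1+δ)²))·(1/T)tr(Φ²Q̄²) ≤ δ/(1+δ) < 1`. -/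
theorem delta_trace_identity {T n : ℕ} (hT : 0 < T) (hn : 0 < n)
    (γ : ℝ) (hγ : 0 < γ)
    (Φ : Matrix (Fin T) (Fin T) ℝ) (hΦ : Φ.PosSemidef) (δ : ℝ) (hδ : 0 < δ)
    (Qb : Matrix (Fin T) (Fin T) ℝ)
    (hQb : Qb = ((((n : ℝ) / T) / (1 + δ)) • Φ + γ • (1 : Matrix (Fin T) (Fin T) ℝ))⁻¹)
    (hfix : δ = (1 / T : ℝ) * (Φ * Qb).trace) :
    δ = ((n : ℝ) * (1 + δ) / (T * (1 + δ) ^ 2)) * ((1 / T : ℝ) * (Φ ^ 2 * Qb ^ 2).trace)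
          + γ * ((1 / T : ℝ) * (Φ * Qb ^ 2).trace) ∧
    ((n : ℝ) / (T * (1 + δ) ^ 2)) * ((1 / T : ℝ) * (Φ ^ 2 * Qb ^ 2).trace) ≤ δ / (1 + δ) ∧
    δ / (1 + δ) < 1 :=
  delta_trace_identity_general γ hγ Φ hΦ δ hδ Qb hQb hfix
end
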